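/- arXiv:2210.00508 — 2 statements merged into one kernel-verified Lean document; each statement's English description precedes it below -/
import Mathlib

section
/- The ruler morphism ρ is L-commuting over nonempty finite square-free words: for every nonempty finite square-free word x, we have ρ(L(x)) = L(ρ(x)), where L(w) denotes the lexicographically least infinite word over ℕ with prefix w whose only square factors are contained in the prefix w. -/
def rho (w : List ℕ) : List ℕ := w.flatMap (fun n => [0, n + 1])

/-- ρ applied to an infinite word. -/
def rhoInf (f : ℕ → ℕ) : ℕ → ℕ := fun n => if n % 2 = 0 then 0 else f (n / 2) + 1

def SqFree (w : List ℕ) : Prop := ∀ y : List ℕ, y ≠ [] → ¬ (y ++ y) <:+: w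

/-- f begins with the finite word w. -/
def HasPrefixW (f : ℕ → ℕ) (w : List ℕ) : Prop := ∀ i < w.length, f i = w.getD i 0

/-- Every square factor of f is contained in the length-|w| prefix. -/
def SquaresInPrefix (w : List ℕ) (f : ℕ → ℕ) : Prop :=
  ∀ i l : ℕ, 0 < l → (∀ j < l, f (i + j) = f (i + l + j)) → i + 2 * l ≤ w.length

def Adm (w : List ℕ) (f : ℕ → ℕ) : Prop := HasPrefixW f w ∧ SquaresInPrefix w f

/-- Lexicographic order on infinite words. -/
def lexLE (f g : ℕ → ℕ) : Prop :=
  f = g ∨ ∃ i, (∀ j < i, f j = g j) ∧ f i < g i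

/-- f = L(w): the lexicographically least infinite word with prefix w whose only
square factors are contained in the prefix w. -/
def IsL (w : List ℕ) (f : ℕ → ℕ) : Prop := Adm w f ∧ ∀ g, Adm w g → lexLE f g

/-!
A word admissible for a square-free `x` is square-free, and `ρ` preserves square-freeness, so
`ρ(L(x))` is admissible for `ρ(x)`. For minimality, let `h` be admissible for `ρ(x)` and first
fall below `ρ(L(x))` at a position `i ≥ |ρ(x)|`. As `ρ(L(x))` vanishes at even positions,
`i = 2a + 1`; `h i = 0` would create the square `00`, so `h i = c + 1` with `c < L(x)_a`. Then
`h` begins with `ρ(p)` for `p = L(x)_0 ⋯ L(x)_{a-1} c`, and squares of `p` lift to squares of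
`h`, hence lie inside `x`; so `p` is square-free. Continuing `p` with ever larger fresh letters
gives a word admissible for `x` and lexicographically below `L(x)`, a contradiction.
-/

def IsSquareAt (f : ℕ → ℕ) (i l : ℕ) : Prop := 0 < l ∧ ∀ j < l, f (i + j) = f (i + l + j)

def InfSqFree (f : ℕ → ℕ) : Prop := ∀ i l, ¬ IsSquareAt f i l

def SqFreeBelow (f : ℕ → ℕ) (n : ℕ) : Prop := ∀ i l, i + 2 * l ≤ n → ¬ IsSquareAt f i l

def lexLT (f g : ℕ → ℕ) : Prop := ∃ i, (∀ j < i, f j = g j) ∧ f i < g i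

section Lex

variable {f g : ℕ → ℕ}

lemma lexLT.not_lexLE (hfg : lexLT f g) : ¬ lexLE g f := by
  obtain ⟨i, hi, hlt⟩ := hfg
  rintro (rfl | ⟨k, hk, hlt'⟩)
  · exact lt_irrefl _ hlt
  · rcases lt_trichotomy i k with h | rfl | h
    · exact absurd (hk i h) (ne_of_gt hlt)
    · exact lt_asymm hlt hlt'
    · exact absurd (hi k h) (ne_of_gt hlt')

lemma lexLE_antisymm (hfg : lexLE f g) (hgf : lexLE g f) : f = g :=
  hfg.resolve_right fun hlt => (show lexLT f g from hlt).not_lexLE hgf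

lemma lexLE_or_lexLT (f g : ℕ → ℕ) : lexLE f g ∨ lexLT g f := by
  by_cases hfg : f = g
  · exact Or.inl (Or.inl hfg)
  have hex : ∃ i, f i ≠ g i := by
    by_contra! h
    exact hfg (funext h)
  have hmin : ∀ j < Nat.find hex, f j = g j := fun j hj => not_ne_iff.mp (Nat.find_min hex hj)
  rcases (Nat.find_spec hex).lt_or_gt with hlt | hlt
  · exact Or.inl (Or.inr ⟨_, hmin, hlt⟩)
  · exact Or.inr ⟨_, fun j hj => (hmin j hj).symm, hlt⟩

end Lex

lemma rhoInf_two_mul (f : ℕ → ℕ) (k : ℕ) : rhoInf f (2 * k) = 0 := by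
  simp [rhoInf]

lemma rhoInf_two_mul_add_one (f : ℕ → ℕ) (k : ℕ) : rhoInf f (2 * k + 1) = f k + 1 := by
  simp [rhoInf, Nat.add_mod, Nat.add_div]

lemma rho_length (w : List ℕ) : (rho w).length = 2 * w.length := by
  simp [rho, List.length_flatMap, mul_comm]

lemma rho_getD (w : List ℕ) {n : ℕ} (hn : n < 2 * w.length) :
    (rho w).getD n 0 = rhoInf (fun k => w.getD k 0) n := by
  induction w generalizing n with
  | nil => simp at hn
  | cons a w ih =>
    match n with
    | 0 => rfl
    | 1 => rfl
    | n + 2 =>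
      have hstep : (rho (a :: w)).getD (n + 2) 0 = (rho w).getD n 0 := by simp [rho]
      rw [hstep, ih (by simp at hn; omega)]
      rcases Nat.even_or_odd' n with ⟨k, rfl | rfl⟩
      · rw [show 2 * k + 2 = 2 * (k + 1) by ring, rhoInf_two_mul, rhoInf_two_mul]
      · rw [show 2 * k + 1 + 2 = 2 * (k + 1) + 1 by ring, rhoInf_two_mul_add_one,
          rhoInf_two_mul_add_one]
        simp

lemma HasPrefixW.rhoInf {f : ℕ → ℕ} {w : List ℕ} (hf : HasPrefixW f w) :
    HasPrefixW (rhoInf f) (rho w) := by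
  intro n hn
  rw [rho_length] at hn
  rw [rho_getD w hn]
  rcases Nat.even_or_odd' n with ⟨k, rfl | rfl⟩
  · simp only [rhoInf_two_mul]
  · simp only [rhoInf_two_mul_add_one, hf k (by omega)]

namespace IsSquareAt

variable {f g : ℕ → ℕ} {i l : ℕ}

lemma congr (hsq : IsSquareAt f i l) (hfg : ∀ k < i + 2 * l, f k = g k) : IsSquareAt g i l :=
  ⟨hsq.1, fun j hj => by rw [← hfg _ (by omega), ← hfg _ (by omega)]; exact hsq.2 j hj⟩

lemma rhoInf (hsq : IsSquareAt f i l) : IsSquareAt (rhoInf f) (2 * i) (2 * l) := by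
  refine ⟨by have := hsq.1; omega, fun j hj => ?_⟩
  rcases Nat.even_or_odd' j with ⟨t, rfl | rfl⟩
  · rw [← mul_add, ← mul_add, ← mul_add, rhoInf_two_mul, rhoInf_two_mul]
  · rw [show 2 * i + (2 * t + 1) = 2 * (i + t) + 1 by ring,
      show 2 * i + 2 * l + (2 * t + 1) = 2 * (i + l + t) + 1 by ring, rhoInf_two_mul_add_one,
      rhoInf_two_mul_add_one, hsq.2 t (by omega)]

/-- Squares of `ρ(f)` have even length, as `ρ(f)` vanishes exactly at even positions. -/
lemma of_rhoInf (hsq : IsSquareAt (_root_.rhoInf f) i l) : IsSquareAt f (i / 2) (l / 2) := by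
  obtain ⟨hl, heq⟩ := hsq
  have hpar (n : ℕ) : _root_.rhoInf f n = 0 ↔ n % 2 = 0 := by
    rcases Nat.even_or_odd' n with ⟨k, rfl | rfl⟩
    · simp [rhoInf_two_mul]
    · simp [rhoInf_two_mul_add_one, Nat.add_mod]
  have hl2 : l % 2 = 0 := by
    have := hpar (i + 0)
    rw [heq 0 hl, hpar] at this
    omega
  refine ⟨by omega, fun t ht => ?_⟩
  obtain ⟨j, hj, hodd⟩ : ∃ j < l, i + j = 2 * (i / 2 + t) + 1 :=
    ⟨2 * t + 1 - i % 2, by omega, by omega⟩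
  have h := heq j hj
  rwa [hodd, show i + l + j = 2 * (i / 2 + l / 2 + t) + 1 by omega, rhoInf_two_mul_add_one,
    rhoInf_two_mul_add_one, Nat.add_right_cancel_iff] at h

end IsSquareAt

lemma InfSqFree.rhoInf {f : ℕ → ℕ} (hf : InfSqFree f) : InfSqFree (rhoInf f) :=
  fun _ _ hsq => hf _ _ hsq.of_rhoInf

lemma Adm.le_length_of_isSquareAt {w : List ℕ} {f : ℕ → ℕ} (ha : Adm w f) {i l : ℕ}
    (hsq : IsSquareAt f i l) : i + 2 * l ≤ w.length :=
  ha.2 i l hsq.1 hsq.2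

lemma adm_of_infSqFree {w : List ℕ} {f : ℕ → ℕ} (hp : HasPrefixW f w) (hf : InfSqFree f) :
    Adm w f :=
  ⟨hp, fun i l hl hsq => absurd ⟨hl, hsq⟩ (hf i l)⟩

lemma SqFree.sqFreeBelow {x : List ℕ} {f : ℕ → ℕ} (hsf : SqFree x) (hp : HasPrefixW f x) :
    SqFreeBelow f x.length := by
  rintro i l hil ⟨hl, hsq⟩
  have hfx (m : ℕ) (hm : m < x.length) : f m = x[m] := by rw [hp m hm, List.getD_eq_getElem]
  have hshift : (x.drop (i + l)).take l = (x.drop i).take l := by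
    refine List.ext_getElem (by simp; omega) fun k h1 h2 => ?_
    simp only [List.length_take, List.length_drop] at h1
    simp only [List.getElem_take, List.getElem_drop]
    rw [← hfx _ (by omega), ← hfx _ (by omega)]
    exact (hsq k (by omega)).symm
  have hyy : (x.drop i).take l ++ (x.drop i).take l = (x.drop i).take (l + l) := by
    rw [List.take_add, List.drop_drop, hshift]
  refine hsf ((x.drop i).take l) (fun h => ?_) ?_
  · have := congrArg List.length h
    simp at this
    omega
  · rw [hyy]
    exact (List.take_prefix _ _).isInfix.trans (List.drop_suffix i x).isInfix

lemma Adm.infSqFree {x : List ℕ} {f : ℕ → ℕ} (ha : Adm x f) (hsf : SqFree x) :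
    InfSqFree f :=
  fun i l hsq => hsf.sqFreeBelow ha.1 i l (ha.le_length_of_isSquareAt hsq) hsq

/-- Past `n` every letter is fresh, so a square reaching beyond `n` would have to repeat one. -/
lemma SqFreeBelow.infSqFree_extend {p : ℕ → ℕ} {n M : ℕ} (hp : SqFreeBelow p n)
    (hM : ∀ k < n, p k < M) : InfSqFree fun k => if k < n then p k else M + k := by
  intro s m hsq
  by_cases hend : s + 2 * m ≤ n
  · exact hp s m hend (hsq.congr fun k hk => if_pos (by omega))
  · have hm := hsq.1
    have hlast := hsq.2 (m - 1) (by omega)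
    simp only [if_neg (by omega : ¬ s + m + (m - 1) < n)] at hlast
    split_ifs at hlast with hk
    · have := hM _ hk
      omega
    · omega

lemma SqFreeBelow.exists_infSqFree_extension {p : ℕ → ℕ} {n : ℕ} (hp : SqFreeBelow p n) :
    ∃ f, InfSqFree f ∧ ∀ k < n, f k = p k := by
  refine ⟨_, hp.infSqFree_extend (M := (Finset.range n).sup p + 1) fun k hk => ?_,
    fun k hk => if_pos hk⟩
  exact Nat.lt_succ_of_le (Finset.le_sup (Finset.mem_range.mpr hk))

lemma IsL.not_sqFreeBelow_update {x : List ℕ} {f : ℕ → ℕ} (hf : IsL x f) {a c : ℕ}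
    (ha : x.length ≤ a) (hc : c < f a) : ¬ SqFreeBelow (Function.update f a c) (a + 1) := by
  intro hp
  obtain ⟨f', hf'sq, hf'p⟩ := hp.exists_infSqFree_extension
  have hagree : ∀ k < a, f' k = f k := fun k hk => by
    rw [hf'p k (by omega), Function.update_of_ne (by omega)]
  have hadm : Adm x f' :=
    adm_of_infSqFree (fun k hk => by rw [hagree k (by omega)]; exact hf.1.1 k hk) hf'sq
  refine (show lexLT f' f from ⟨a, hagree, ?_⟩).not_lexLE (hf.2 f' hadm)
  rwa [hf'p a (by omega), Function.update_self]

lemma IsL.rhoInf_lexLE {x : List ℕ} {f h : ℕ → ℕ} (hsf : SqFree x) (hf : IsL x f)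
    (hh : Adm (rho x) h) : lexLE (rhoInf f) h := by
  refine (lexLE_or_lexLT _ _).resolve_right ?_
  rintro ⟨i, hagree, hlt⟩
  have hi : 2 * x.length ≤ i := by
    by_contra! hi
    have hlen : i < (rho x).length := by rw [rho_length]; exact hi
    exact hlt.ne (by rw [hh.1 i hlen, hf.1.1.rhoInf i hlen])
  obtain ⟨a, rfl⟩ : ∃ a, i = 2 * a + 1 := by
    rcases Nat.even_or_odd' i with ⟨a, rfl | rfl⟩
    · rw [rhoInf_two_mul] at hlt
      omega
    · exact ⟨a, rfl⟩
  rw [rhoInf_two_mul_add_one] at hlt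
  have heven : h (2 * a) = 0 := by rw [hagree _ (by omega), rhoInf_two_mul]
  obtain ⟨c, hc⟩ : ∃ c, h (2 * a + 1) = c + 1 := by
    refine Nat.exists_eq_succ_of_ne_zero fun h0 => ?_
    have := hh.le_length_of_isSquareAt (i := 2 * a) (l := 1)
      ⟨one_pos, fun j hj => by rw [Nat.lt_one_iff.mp hj]; simp [heven, h0]⟩
    rw [rho_length] at this
    omega
  have hprefix : ∀ k < 2 * (a + 1), rhoInf (Function.update f a c) k = h k := by
    intro k hk
    rcases Nat.even_or_odd' k with ⟨t, rfl | rfl⟩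
    · rw [rhoInf_two_mul, hagree _ (by omega), rhoInf_two_mul]
    · rcases (show t ≤ a by omega).lt_or_eq with ht | rfl
      · rw [rhoInf_two_mul_add_one, Function.update_of_ne ht.ne, hagree _ (by omega),
          rhoInf_two_mul_add_one]
      · rw [rhoInf_two_mul_add_one, Function.update_self, hc]
  refine hf.not_sqFreeBelow_update (a := a) (c := c) (by omega) (by omega)
    fun s m hsm hsq => ?_
  have hsx : s + 2 * m ≤ x.length := by
    have := hh.le_length_of_isSquareAt (hsq.rhoInf.congr fun k hk => hprefix k (by omega))
    rw [rho_length] at this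
    omega
  exact hf.1.infSqFree hsf s m
    (hsq.congr fun k hk => Function.update_of_ne (show k ≠ a by omega) _ _)

theorem rho_L_commuting_general (x : List ℕ) (hsf : SqFree x)
    (f g : ℕ → ℕ) (hf : IsL x f) (hg : IsL (rho x) g) :
    rhoInf f = g := by
  have hadm : Adm (rho x) (rhoInf f) :=
    adm_of_infSqFree hf.1.1.rhoInf (hf.1.infSqFree hsf).rhoInf
  exact lexLE_antisymm (hf.rhoInf_lexLE hsf hg.1) (hg.2 _ hadm)

/-- The ruler morphism is L-commuting over nonempty finite square-free words:
ρ(L(x)) = L(ρ(x)). -/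
theorem rho_L_commuting (x : List ℕ) (hx : x ≠ []) (hsf : SqFree x)
    (f g : ℕ → ℕ) (hf : IsL x f) (hg : IsL (rho x) g) :
    rhoInf f = g :=
  rho_L_commuting_general x hsf f g hf hg
end

section
/- For all n ≥ 1, P_0(n) = R_n · P_0(n−1), where P_0(n) := R_{n+1} with its last two letters removed and R_n := ρ^n(0). -/
def R (n : ℕ) : List ℕ := rho^[n] [0]

/-- P₀(n) := R_{n+1} with its last two letters removed. -/
def P0 (n : ℕ) : List ℕ := (R (n + 1)).dropLast.dropLast

/-!
Since `ρ` is a morphism, `R_{n+1} = P₀(n) · 0(n+1)` gives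
`R_{n+2} = ρ(P₀(n)) · 01 · 0(n+2)`, so `P₀(n+1) = ρ(P₀(n)) · 01`. Applying `ρ` to the recursion
`P₀(n) = R_n · P₀(n-1)` and appending `01` then yields it for `n + 1`.
-/

lemma rho_append (u v : List ℕ) : rho (u ++ v) = rho u ++ rho v :=
  List.flatMap_append

lemma R_succ (n : ℕ) : R (n + 1) = rho (R n) :=
  Function.iterate_succ_apply' rho n [0]

lemma dropLast_dropLast_append_pair (l : List ℕ) (a b : ℕ) :
    (l ++ [a, b]).dropLast.dropLast = l := by
  rw [← List.singleton_append, ← List.append_assoc, List.dropLast_concat, List.dropLast_concat]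

lemma P0_eq_of_R_succ {n : ℕ} {u : List ℕ} (h : R (n + 1) = u ++ [0, n + 1]) : P0 n = u := by
  rw [P0, h, dropLast_dropLast_append_pair]

lemma R_succ_eq_P0_append (n : ℕ) : R (n + 1) = P0 n ++ [0, n + 1] := by
  induction n with
  | zero => rfl
  | succ n ih =>
    have hR : R (n + 2) = (rho (P0 n) ++ [0, 1]) ++ [0, n + 2] := by
      rw [R_succ, ih, rho_append]
      simp [rho]
    rwa [P0_eq_of_R_succ hR]

lemma P0_succ (n : ℕ) : P0 (n + 1) = rho (P0 n) ++ [0, 1] := by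
  apply P0_eq_of_R_succ
  rw [R_succ, R_succ_eq_P0_append, rho_append]
  simp [rho]

lemma P0_succ_eq_R_append (n : ℕ) : P0 (n + 1) = R (n + 1) ++ P0 n := by
  induction n with
  | zero => rfl
  | succ n ih =>
    conv_lhs => rw [P0_succ, ih, rho_append, ← R_succ, List.append_assoc, ← P0_succ]

/-- For all n ≥ 1, P₀(n) = R_n · P₀(n−1). -/
theorem P0_rec (n : ℕ) (hn : 1 ≤ n) : P0 n = R n ++ P0 (n - 1) := by
  obtain ⟨m, rfl⟩ := Nat.exists_eq_add_of_le' hn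
  exact P0_succ_eq_R_append m
end
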